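/- The localized rotational vector field is tangentially divergence free on the sphere: let R > 0, N = (0,0,R), let g : ℝ → ℝ be differentiable, and define the vector field V : ℝ³ → ℝ³ by V(y) = g(y₃)(N × y), where y₃ is the third coordinate of y. Then for every x ∈ ℝ³ with ‖x‖ = R, ∑_{i,j=1}^{3} (δ_{ij} − x_i x_j / R²) ∂_j V_i(x) = 0; that is, the velocity field ∂_e χ(0,·) = η(x)(N/R × x) of the localized rotation (with cut-off depending only on x₃) has vanishing tangential divergence. -/

import Mathlib

/-
The derivative of `V(y) = g(y₃)(N × y)` at `x` is `h ↦ g'(x₃) h₃ (N × x) + g(x₃)(N × h)`: a rank-one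
map `(N × x) e₃ᵀ` plus the skew map `N × ·`. Contracting with the symmetric matrix
`δᵢⱼ − xᵢxⱼ/R²` kills the skew part, and turns the rank-one part into
`(N × x)₃ − ⟪x, N × x⟫ x₃ / R²`, where both `(N × x)₃ = 0` (as `N` points along `e₃`) and
`⟪x, N × x⟫ = 0`.
-/

open scoped RealInnerProductSpace

noncomputable section

/-- Euclidean 3-space. -/
abbrev E3 := EuclideanSpace ℝ (Fin 3)

/-- The cross product on `E3`. -/
def cross3 (a b : E3) : E3 :=
  (WithLp.equiv 2 (Fin 3 → ℝ)).symm
    (crossProduct ((WithLp.equiv 2 (Fin 3 → ℝ)) a) ((WithLp.equiv 2 (Fin 3 → ℝ)) b))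

/-- Rotation by angle `α` about the axis spanned by the unit vector `n`:
`R_n(α)x = (n·x)n + cos(α)((n × x) × n) + sin(α)(n × x)`. -/
def Rn (n : E3) (α : ℝ) (x : E3) : E3 :=
  (⟪n, x⟫ : ℝ) • n + Real.cos α • cross3 (cross3 n x) n + Real.sin α • cross3 n x

open Matrix

section TangentialProjection

variable {ι : Type*} [Fintype ι] [DecidableEq ι] (x : ι → ℝ) (c : ℝ)

theorem sum_tangentialProjection_mul_eq_zero_of_antisymm (A : ι → ι → ℝ)
    (hA : ∀ i j, A j i = -A i j) :
    ∑ i, ∑ j, ((if i = j then (1 : ℝ) else 0) - x i * x j / c) * A i j = 0 := by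
  set S := ∑ i, ∑ j, ((if i = j then (1 : ℝ) else 0) - x i * x j / c) * A i j
  have hS : S = -S := by
    calc S = ∑ j, ∑ i, ((if i = j then (1 : ℝ) else 0) - x i * x j / c) * A i j :=
          Finset.sum_comm
      _ = -S := by
          simp only [S, ← Finset.sum_neg_distrib]
          refine Finset.sum_congr rfl fun j _ => Finset.sum_congr rfl fun i _ => ?_
          rw [hA, if_congr eq_comm rfl rfl]
          ring
  linarith

theorem sum_tangentialProjection_mul_rankOne (u w : ι → ℝ) :
    ∑ i, ∑ j, ((if i = j then (1 : ℝ) else 0) - x i * x j / c) * (u i * w j) =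
      u ⬝ᵥ w - (x ⬝ᵥ u) * (x ⬝ᵥ w) / c := by
  have hdiag : ∑ i, ∑ j, (if i = j then (1 : ℝ) else 0) * (u i * w j) = u ⬝ᵥ w := by
    simp [dotProduct]
  have hquad : ∑ i, ∑ j, x i * x j / c * (u i * w j) = (x ⬝ᵥ u) * (x ⬝ᵥ w) / c := by
    simp only [dotProduct, Finset.sum_mul_sum, Finset.sum_div]
    refine Finset.sum_congr rfl fun i _ => Finset.sum_congr rfl fun j _ => ?_
    ring
  simp only [sub_mul, Finset.sum_sub_distrib, hdiag, hquad]

theorem sum_tangentialProjection_mul_eq_zero (a b : ℝ) (u w : ι → ℝ) (A : ι → ι → ℝ)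
    (hA : ∀ i j, A j i = -A i j) (huw : u ⬝ᵥ w = 0) (hxu : x ⬝ᵥ u = 0) :
    ∑ i, ∑ j, ((if i = j then (1 : ℝ) else 0) - x i * x j / c) * (a * (u i * w j) + b * A i j)
      = 0 := by
  simp only [mul_add, mul_left_comm _ a, mul_left_comm _ b, Finset.sum_add_distrib,
    ← Finset.mul_sum, sum_tangentialProjection_mul_rankOne, sum_tangentialProjection_mul_eq_zero_of_antisymm _ _ A hA,
    huw, hxu]
  ring

end TangentialProjection

def cross3CLM (a : E3) : E3 →L[ℝ] E3 :=
  LinearMap.toContinuousLinearMap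
    ((WithLp.linearEquiv 2 ℝ (Fin 3 → ℝ)).symm.toLinearMap ∘ₗ crossProduct a.ofLp ∘ₗ
      (WithLp.linearEquiv 2 ℝ (Fin 3 → ℝ)).toLinearMap)

theorem cross3CLM_apply (a b : E3) : cross3CLM a b = cross3 a b := rfl

theorem cross3_apply (a b : E3) (i : Fin 3) : cross3 a b i = (a.ofLp ⨯₃ b.ofLp) i := rfl

theorem dotProduct_cross3_self (a x : E3) : x.ofLp ⬝ᵥ (cross3 a x).ofLp = 0 :=
  dot_cross_self a.ofLp x.ofLp

theorem cross3_single_apply_self (k : Fin 3) (r : ℝ) (x : E3) :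
    cross3 (EuclideanSpace.single k r) x k = 0 := by
  fin_cases k <;> simp [cross3_apply, cross_apply]

theorem cross3_single_one_antisymm (a : E3) (i j : Fin 3) :
    cross3 a (EuclideanSpace.single i 1) j = -cross3 a (EuclideanSpace.single j 1) i := by
  fin_cases i <;> fin_cases j <;> simp [cross3_apply, cross_apply]

theorem hasFDerivAt_comp_apply_smul_cross3 {g : ℝ → ℝ} (a x : E3) (k : Fin 3)
    (hg : DifferentiableAt ℝ g (x k)) :
    HasFDerivAt (fun y : E3 => g (y k) • cross3 a y)
      (g (x k) • cross3CLM a + (deriv g (x k) • EuclideanSpace.proj k).smulRight (cross3 a x)) x :=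
  (hg.hasDerivAt.comp_hasFDerivAt x (EuclideanSpace.proj k : E3 →L[ℝ] ℝ).hasFDerivAt).smul
    (cross3CLM a).hasFDerivAt

theorem fderiv_comp_apply_smul_cross3_apply {g : ℝ → ℝ} (a x : E3) (k : Fin 3)
    (hg : DifferentiableAt ℝ g (x k)) (v : E3) (i : Fin 3) :
    fderiv ℝ (fun y : E3 => g (y k) • cross3 a y) x v i =
      deriv g (x k) * (cross3 a x i * v k) + g (x k) * cross3 a v i := by
  rw [(hasFDerivAt_comp_apply_smul_cross3 a x k hg).fderiv]
  simp only [_root_.add_apply, _root_.smul_apply, cross3CLM_apply,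
    ContinuousLinearMap.smulRight_apply, PiLp.proj_apply, smul_eq_mul, PiLp.add_apply,
    PiLp.smul_apply]
  ring

theorem localized_rotational_field_tangentially_divergence_free_general (R : ℝ)
    (g : ℝ → ℝ) (hg : Differentiable ℝ g) (x : E3) :
    ∑ i : Fin 3, ∑ j : Fin 3,
      ((if i = j then (1 : ℝ) else 0) - x i * x j / R ^ 2) *
        (fderiv ℝ
          (fun y : E3 => g (y 2) • cross3 (EuclideanSpace.single (2 : Fin 3) R) y) x
          (EuclideanSpace.single j 1) i) = 0 := by
  set N : E3 := EuclideanSpace.single 2 R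
  simp only [fderiv_comp_apply_smul_cross3_apply N x 2 (hg _)]
  refine sum_tangentialProjection_mul_eq_zero x.ofLp _ _ _ (cross3 N x).ofLp
    (fun j => (EuclideanSpace.single j 1 : E3) 2) _ (fun i j => cross3_single_one_antisymm N i j)
    ?_ (dotProduct_cross3_self N x)
  simpa [dotProduct] using cross3_single_apply_self 2 R x

/-- the localized rotational vector field `V(y) = g(y₃)(N × y)`,
`N = (0,0,R)`, with differentiable `g : ℝ → ℝ`, is tangentially divergence free on
the sphere of radius `R`: `∑ᵢⱼ (δᵢⱼ − xᵢxⱼ/R²) ∂ⱼVᵢ(x) = 0` whenever `‖x‖ = R`. -/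
theorem localized_rotational_field_tangentially_divergence_free (R : ℝ) (hR : 0 < R)
    (g : ℝ → ℝ) (hg : Differentiable ℝ g) (x : E3) (hx : ‖x‖ = R) :
    ∑ i : Fin 3, ∑ j : Fin 3,
      ((if i = j then (1 : ℝ) else 0) - x i * x j / R ^ 2) *
        (fderiv ℝ
          (fun y : E3 => g (y 2) • cross3 (EuclideanSpace.single (2 : Fin 3) R) y) x
          (EuclideanSpace.single j 1) i) = 0 :=
  localized_rotational_field_tangentially_divergence_free_general R g hg x
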